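/- arXiv:1805.02178 — 3 statements merged into one kernel-verified Lean document; each statement's English description precedes it below -/
import Mathlib

section
/- In the metric space ℝⁿ with the Euclidean metric, the half-spaces Uᵢ = {x : x₁ ≥ i} with track points xᵢ = (i,0,…,0) do NOT form an infinite Φ-chain for any admissible function Φ; in fact, ℝⁿ (n ≥ 2, Euclidean) admits no infinite Φ-chain at all. -/
/-!
Let the path `γ` leave `U m₁` for the last time and then stay in `U m₂`. Its last-exit points
`zₘ ∈ ∂U m` are crossed in order, and consecutive ones are at least `Φ (dist zₘ (x m))` apart, so
`∑ₘ Φ (dist zₘ (x m))` is at most the length of `γ`. Along segments from `x 0` this gives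
`dist z (x 0) ≥ j Φ 0` on `∂U (j + 1)`. On the other hand `dist (x m) (x 0) ≤ 3 m Φ 0`.

Pick `N` with `Φ (N Φ 0) ≥ 400 Φ 0`, put `k = 2N + 2`, and let `R = dist (x l) (x 0)` for
`l = 16k + 1`, so `16 k Φ 0 ≤ R ≤ 3 l Φ 0` and `x l ∈ U (2k)`. If the sphere `S(x 0, R)` lies
in `U k`, two opposite radii cross each `∂U m` (`N < m < k`) at points `≥ 2 N Φ 0` apart, so
one of them is `N Φ 0` away from `x m`, and the two radii would cost more than `2R`. Otherwise
join a point of the sphere outside `U k` to `x l` by a path of length `≤ 8R` that avoids the ball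
`B(x 0, R / 2)`, which needs a second dimension; it stays far from every `x m`, `m < 2k`, and its
`k` crossings would cost more than `8R`.
-/

open Metric Filter Set

structure IsPhiChain {X : Type*} [PseudoMetricSpace X] (Φ : ℝ → ℝ) (U : ℕ → Set X) (x : ℕ → X) :
    Prop where
  monotoneOn : MonotoneOn Φ (Ici 0)
  pos : 0 < Φ 0
  tendsto : Tendsto Φ atTop atTop
  isOpen : ∀ i, IsOpen (U i)
  succ_subset : ∀ i, U (i + 1) ⊆ U i
  le_dist_succ : ∀ i, Φ 0 ≤ dist (x i) (x (i + 1))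
  dist_succ_le : ∀ i, dist (x i) (x (i + 1)) ≤ 3 * Φ 0
  mem_frontier : ∀ i, x i ∈ frontier (U i)
  le_infDist_succ : ∀ i, ∀ y ∈ frontier (U i), Φ (dist y (x i)) ≤ infDist y (frontier (U (i + 1)))
  -- the backward condition at `i + 1`, avoiding the truncated `i - 1`
  le_infDist_pred : ∀ i, ∀ y ∈ frontier (U (i + 1)),
    Φ (dist y (x (i + 1))) ≤ infDist y (frontier (U i))

section LastExit

variable {X : Type*} {γ : ℝ → X} {V W : Set X} {a b : ℝ}

noncomputable def lastExit (γ : ℝ → X) (V : Set X) (a b : ℝ) : ℝ :=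
  sSup {t ∈ Icc a b | γ t ∉ V}

theorem lastExit_mem [TopologicalSpace X] (hγ : Continuous γ) (hV : IsOpen V) (hab : a ≤ b)
    (ha : γ a ∉ V) : lastExit γ V a b ∈ {t ∈ Icc a b | γ t ∉ V} :=
  (isClosed_Icc.inter (hV.isClosed_compl.preimage hγ)).csSup_mem ⟨a, ⟨le_rfl, hab⟩, ha⟩
    ⟨b, fun _ ht => ht.1.2⟩

theorem lastExit_mono (hab : a ≤ b) (ha : γ a ∉ V) (hWV : W ⊆ V) :
    lastExit γ V a b ≤ lastExit γ W a b :=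
  csSup_le_csSup ⟨b, fun _ ht => ht.1.2⟩ ⟨a, ⟨le_rfl, hab⟩, ha⟩
    fun _ ht => ⟨ht.1, fun h => ht.2 (hWV h)⟩

theorem map_lastExit_mem_frontier [TopologicalSpace X] (hγ : Continuous γ) (hV : IsOpen V)
    (hab : a ≤ b) (ha : γ a ∉ V) (hb : γ b ∈ V) : γ (lastExit γ V a b) ∈ frontier V := by
  obtain ⟨⟨haT, hTb⟩, hT⟩ := lastExit_mem hγ hV hab ha
  have hTb' : lastExit γ V a b < b := hTb.lt_of_ne fun h => hT (by rw [h]; exact hb)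
  have hafter : MapsTo γ (Ioc (lastExit γ V a b) b) V := fun t ht => by
    by_contra h
    exact ht.1.not_ge (le_csSup ⟨b, fun _ hs => hs.1.2⟩ ⟨⟨haT.trans ht.1.le, ht.2⟩, h⟩)
  rw [hV.frontier_eq]
  exact ⟨map_mem_closure hγ (by rw [closure_Ioc hTb'.ne]; exact ⟨le_rfl, hTb⟩) hafter, hT⟩

end LastExit

namespace IsPhiChain

variable {X : Type*} [PseudoMetricSpace X] {Φ : ℝ → ℝ} {U : ℕ → Set X} {x : ℕ → X}

theorem antitone (h : IsPhiChain Φ U x) : Antitone U := antitone_nat_of_succ_le h.succ_subset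

theorem phi_zero_le (h : IsPhiChain Φ U x) {d : ℝ} (hd : 0 ≤ d) : Φ 0 ≤ Φ d :=
  h.monotoneOn self_mem_Ici hd hd

theorem phi_le_add (h : IsPhiChain Φ U x) {r d₁ d₂ : ℝ} (hr : 0 ≤ r) (hd₁ : 0 ≤ d₁)
    (hd₂ : 0 ≤ d₂) (hle : 2 * r ≤ d₁ + d₂) : Φ r ≤ Φ d₁ + Φ d₂ := by
  have h₁ := h.phi_zero_le hd₁
  have h₂ := h.phi_zero_le hd₂
  rcases le_total r d₁ with hr₁ | hr₁
  · linarith [h.monotoneOn hr hd₁ hr₁, h.pos]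
  · linarith [h.monotoneOn hr hd₂ (by linarith), h.pos]

theorem notMem_of_le (h : IsPhiChain Φ U x) {i j : ℕ} (hij : i ≤ j) : x i ∉ U j := fun hj =>
  (disjoint_frontier_iff_isOpen.2 (h.isOpen i)).notMem_of_mem_left (h.mem_frontier i)
    (h.antitone hij hj)

theorem phi_zero_le_infDist (h : IsPhiChain Φ U x) {i : ℕ} {y : X} (hy : y ∈ frontier (U (i + 1))) :
    Φ 0 ≤ infDist y (frontier (U i)) :=
  (h.phi_zero_le dist_nonneg).trans (h.le_infDist_pred i y hy)

theorem mem_of_mem_frontier_succ (h : IsPhiChain Φ U x) {i : ℕ} {y : X}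
    (hy : y ∈ frontier (U (i + 1))) : y ∈ U i := by
  have hcl : y ∈ U i ∪ frontier (U i) := by
    rw [← closure_eq_self_union_frontier]
    exact closure_mono (h.succ_subset i) (frontier_subset_closure hy)
  refine hcl.resolve_right fun hfr => ?_
  have := h.phi_zero_le_infDist hy
  rw [infDist_zero_of_mem hfr] at this
  exact this.not_gt h.pos

theorem dist_le_three_mul (h : IsPhiChain Φ U x) (m : ℕ) : dist (x m) (x 0) ≤ 3 * m * Φ 0 := by
  induction m with
  | zero => simp
  | succ m ih =>
    calc dist (x (m + 1)) (x 0) ≤ dist (x m) (x (m + 1)) + dist (x m) (x 0) :=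
          dist_triangle_left _ _ _
      _ ≤ 3 * Φ 0 + 3 * m * Φ 0 := add_le_add (h.dist_succ_le m) ih
      _ = 3 * ↑(m + 1) * Φ 0 := by push_cast; ring

theorem exists_sum_le_of_lipschitzWith (h : IsPhiChain Φ U x) {γ : ℝ → X} {L : NNReal}
    (hγ : LipschitzWith L γ) {a b : ℝ} (hab : a ≤ b) {m₁ m₂ : ℕ} (hm : m₁ ≤ m₂)
    (ha : γ a ∉ U m₁) (hb : γ b ∈ U m₂) :
    ∃ T : ℕ → ℝ, (∀ m ∈ Finset.Ico m₁ m₂, T m ∈ Icc a b ∧ γ (T m) ∈ frontier (U m)) ∧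
      ∑ m ∈ Finset.Ico m₁ m₂, Φ (dist (γ (T m)) (x m)) ≤ L * (b - a) := by
  -- Last exits from the nested `U m` are monotone in `m`, so the crossing gaps telescope.
  set T := fun m => lastExit γ (U m) a b
  have ha' {m} (hm : m₁ ≤ m) : γ a ∉ U m := fun h' => ha (h.antitone hm h')
  have hb' {m} (hm : m ≤ m₂) : γ b ∈ U m := h.antitone hm hb
  have hT {m} (hm : m₁ ≤ m) : T m ∈ Icc a b :=
    (lastExit_mem hγ.continuous (h.isOpen m) hab (ha' hm)).1
  have hfr {m} (hm₁ : m₁ ≤ m) (hm₂ : m ≤ m₂) : γ (T m) ∈ frontier (U m) :=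
    map_lastExit_mem_frontier hγ.continuous (h.isOpen m) hab (ha' hm₁) (hb' hm₂)
  refine ⟨T, fun m hm => ?_, ?_⟩
  · obtain ⟨hm₁, hm₂⟩ := Finset.mem_Ico.1 hm
    exact ⟨hT hm₁, hfr hm₁ hm₂.le⟩
  have hstep : ∀ m ∈ Finset.Ico m₁ m₂, Φ (dist (γ (T m)) (x m)) ≤ L * (T (m + 1) - T m) := by
    intro m hm
    obtain ⟨hm₁, hm₂⟩ := Finset.mem_Ico.1 hm
    have hTT : T m ≤ T (m + 1) := lastExit_mono hab (ha' hm₁) (h.succ_subset m)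
    calc Φ (dist (γ (T m)) (x m)) ≤ infDist (γ (T m)) (frontier (U (m + 1))) :=
          h.le_infDist_succ m _ (hfr hm₁ hm₂.le)
      _ ≤ dist (γ (T m)) (γ (T (m + 1))) := infDist_le_dist_of_mem (hfr (by omega) hm₂)
      _ ≤ L * dist (T m) (T (m + 1)) := hγ.dist_le_mul _ _
      _ = L * (T (m + 1) - T m) := by rw [Real.dist_eq, abs_sub_comm, abs_of_nonneg (by linarith)]
  calc ∑ m ∈ Finset.Ico m₁ m₂, Φ (dist (γ (T m)) (x m))
        ≤ ∑ m ∈ Finset.Ico m₁ m₂, L * (T (m + 1) - T m) :=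
        Finset.sum_le_sum hstep
    _ = L * (T m₂ - T m₁) := by rw [← Finset.mul_sum, Finset.sum_Ico_sub T hm]
    _ ≤ L * (b - a) := by
        gcongr
        · exact (hT hm).2
        · exact (hT le_rfl).1

theorem card_mul_le_of_lipschitzWith (h : IsPhiChain Φ U x) {γ : ℝ → X} {L : NNReal}
    (hγ : LipschitzWith L γ) {a b : ℝ} (hab : a ≤ b) {m₁ m₂ : ℕ} (hm : m₁ ≤ m₂)
    (ha : γ a ∉ U m₁) (hb : γ b ∈ U m₂) {M : ℝ}
    (hM : ∀ m ∈ Finset.Ico m₁ m₂, ∀ t ∈ Icc a b, γ t ∈ frontier (U m) → M ≤ Φ (dist (γ t) (x m))) :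
    ((m₂ - m₁ : ℕ) : ℝ) * M ≤ L * (b - a) := by
  obtain ⟨T, hT, hsum⟩ := h.exists_sum_le_of_lipschitzWith hγ hab hm ha hb
  calc ((m₂ - m₁ : ℕ) : ℝ) * M = (Finset.Ico m₁ m₂).card • M := by simp
    _ ≤ ∑ m ∈ Finset.Ico m₁ m₂, Φ (dist (γ (T m)) (x m)) :=
        Finset.card_nsmul_le_sum _ _ _ fun m hm => hM m hm _ (hT m hm).1 (hT m hm).2
    _ ≤ L * (b - a) := hsum

end IsPhiChain

namespace IsPhiChain

variable {E : Type*} [NormedAddCommGroup E] [NormedSpace ℝ E] {Φ : ℝ → ℝ} {U : ℕ → Set E}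
  {x : ℕ → E}

theorem mul_le_dist_of_mem_frontier (h : IsPhiChain Φ U x) {y : E} (hy : y ∉ U 1) (j : ℕ) {z : E}
    (hz : z ∈ frontier (U (j + 1))) : j * Φ 0 ≤ dist z y := by
  induction j generalizing z with
  | zero => simp
  | succ j ih =>
    have hyU : y ∉ U (j + 1) := fun h' => hy (h.antitone (by omega) h')
    have hγ := (lipschitzWith_lineMap (𝕜 := ℝ) y z).continuous
    set w := AffineMap.lineMap y z (lastExit (AffineMap.lineMap y z) (U (j + 1)) 0 1)
    have hT := lastExit_mem hγ (h.isOpen _) zero_le_one (by simpa using hyU)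
    have hw : w ∈ frontier (U (j + 1)) := map_lastExit_mem_frontier hγ (h.isOpen _) zero_le_one
      (by simpa using hyU) (by simpa using h.mem_of_mem_frontier_succ hz)
    have hseg : w ∈ segment ℝ y z := by
      rw [segment_eq_image_lineMap]
      exact mem_image_of_mem _ hT.1
    have hzw : Φ 0 ≤ dist z w := (h.phi_zero_le_infDist hz).trans (infDist_le_dist_of_mem hw)
    have hwy := ih hw
    have hywz := dist_add_dist_of_mem_segment hseg
    rw [dist_comm y w, dist_comm y z, dist_comm w z] at hywz
    push_cast
    linarith

theorem exists_sum_le_along_ray (h : IsPhiChain Φ U x) {v : E} (hv : ‖v‖ = 1) {R : ℝ} (hR : 0 ≤ R)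
    {N k : ℕ} (hk : N + 1 ≤ k) (hp : x 0 + R • v ∈ U k) :
    ∃ T : ℕ → ℝ, (∀ m ∈ Finset.Ico (N + 1) k, N * Φ 0 ≤ T m) ∧
      ∑ m ∈ Finset.Ico (N + 1) k, Φ (dist (x 0 + T m • v) (x m)) ≤ R := by
  have hγ : LipschitzWith 1 fun t : ℝ => x 0 + t • v := LipschitzWith.of_dist_le_mul fun s t => by
    simp [dist_eq_norm, ← sub_smul, norm_smul, hv]
  obtain ⟨T, hT, hsum⟩ := h.exists_sum_le_of_lipschitzWith hγ hR hk
    (by simpa using h.notMem_of_le (Nat.zero_le (N + 1))) hp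
  refine ⟨T, fun m hm => ?_, by simpa using hsum⟩
  obtain ⟨⟨hT0, -⟩, hfr⟩ := hT m hm
  obtain ⟨j, rfl⟩ : ∃ j, m = j + 1 := ⟨m - 1, by have := (Finset.mem_Ico.1 hm).1; omega⟩
  have hNj : (N : ℝ) ≤ j := by have := (Finset.mem_Ico.1 hm).1; exact_mod_cast (by omega : N ≤ j)
  have hchord := h.mul_le_dist_of_mem_frontier (h.notMem_of_le (Nat.zero_le 1)) j hfr
  rw [dist_self_add_left, norm_smul, hv, mul_one, Real.norm_of_nonneg hT0] at hchord
  nlinarith [h.pos]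

theorem sub_mul_le_of_two_rays (h : IsPhiChain Φ U x) {v : E} (hv : ‖v‖ = 1) {R : ℝ}
    (hR : 0 ≤ R) {N k : ℕ} (hk : N + 1 ≤ k) (hp : x 0 + R • v ∈ U k) (hq : x 0 - R • v ∈ U k) :
    ((k - (N + 1) : ℕ) : ℝ) * Φ (N * Φ 0) ≤ 2 * R := by
  have hNφ : 0 ≤ N * Φ 0 := mul_nonneg N.cast_nonneg h.pos.le
  obtain ⟨T₁, hT₁, hsum₁⟩ := h.exists_sum_le_along_ray hv hR hk hp
  obtain ⟨T₂, hT₂, hsum₂⟩ := h.exists_sum_le_along_ray (v := -v) (by rwa [norm_neg]) hR hk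
    (by rwa [smul_neg, ← sub_eq_add_neg])
  have hpair : ∀ m ∈ Finset.Ico (N + 1) k, Φ (N * Φ 0) ≤
      Φ (dist (x 0 + T₁ m • v) (x m)) + Φ (dist (x 0 + T₂ m • -v) (x m)) := by
    intro m hm
    have h₁ := hT₁ m hm
    have h₂ := hT₂ m hm
    have hopp : dist (x 0 + T₁ m • v) (x 0 + T₂ m • -v) = T₁ m + T₂ m := by
      rw [dist_add_left, dist_eq_norm, smul_neg, sub_neg_eq_add, ← add_smul, norm_smul, hv,
        mul_one, Real.norm_of_nonneg (by linarith)]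
    refine h.phi_le_add hNφ dist_nonneg dist_nonneg ?_
    linarith [dist_triangle_right (x 0 + T₁ m • v) (x 0 + T₂ m • -v) (x m)]
  calc ((k - (N + 1) : ℕ) : ℝ) * Φ (N * Φ 0) = (Finset.Ico (N + 1) k).card • Φ (N * Φ 0) := by
        simp
    _ ≤ ∑ m ∈ Finset.Ico (N + 1) k,
        (Φ (dist (x 0 + T₁ m • v) (x m)) + Φ (dist (x 0 + T₂ m • -v) (x m))) :=
        Finset.card_nsmul_le_sum _ _ _ hpair
    _ ≤ 2 * R := by rw [Finset.sum_add_distrib]; linarith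

end IsPhiChain

theorem LipschitzWith.smul_const {α E : Type*} [PseudoEMetricSpace α] [SeminormedAddCommGroup E]
    [NormedSpace ℝ E] {K : NNReal} {f : α → ℝ} (hf : LipschitzWith K f) (v : E) :
    LipschitzWith (‖v‖₊ * K) fun t => f t • v := by
  have := (ContinuousLinearMap.toSpanSingleton ℝ v).lipschitz.comp hf
  rw [ContinuousLinearMap.nnnorm_toSpanSingleton] at this
  exact this

section InnerProductSpace

open Module
open scoped RealInnerProductSpace

variable {E : Type*} [NormedAddCommGroup E] [InnerProductSpace ℝ E]

theorem exists_norm_eq_one_inner_eq_zero [FiniteDimensional ℝ E] (hE : 2 ≤ finrank ℝ E) (u : E) :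
    ∃ w : E, ‖w‖ = 1 ∧ ⟪u, w⟫ = 0 := by
  have hspan : finrank ℝ (ℝ ∙ u) ≤ 1 := by
    simpa using finrank_span_le_card ({u} : Set E)
  have hpos : 0 < finrank ℝ (ℝ ∙ u)ᗮ := by
    have := (ℝ ∙ u).finrank_add_finrank_orthogonal
    omega
  obtain ⟨⟨w, hw⟩, hne⟩ := Module.finrank_pos_iff_exists_ne_zero.mp hpos
  have hw0 : w ≠ 0 := fun h => hne (by simp [h])
  refine ⟨‖w‖⁻¹ • w, norm_smul_inv_norm hw0, ?_⟩
  rw [real_inner_smul_right,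
    Submodule.inner_right_of_mem_orthogonal (Submodule.mem_span_singleton_self u) hw, mul_zero]

theorem exists_norm_eq_one_inner_eq_zero_inner_nonneg [FiniteDimensional ℝ E]
    (hE : 2 ≤ finrank ℝ E) (u v : E) :
    ∃ w : E, ‖w‖ = 1 ∧ ⟪u, w⟫ = 0 ∧ 0 ≤ ⟪v, w⟫ := by
  obtain ⟨w, hw, huw⟩ := exists_norm_eq_one_inner_eq_zero hE u
  rcases le_total 0 ⟪v, w⟫ with hvw | hvw
  · exact ⟨w, hw, huw, hvw⟩
  · exact ⟨-w, by rw [norm_neg, hw], by rw [inner_neg_right, huw, neg_zero],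
      by rw [inner_neg_right]; linarith⟩

theorem half_le_norm_smul_add_smul {u v : E} {R a b : ℝ} (huv : 0 ≤ ⟪u, v⟫) (hu : ‖u‖ = R)
    (hv : ‖v‖ = R) (ha : 0 ≤ a) (hb : 0 ≤ b) (hab : a + b = 1) : R / 2 ≤ ‖a • u + b • v‖ := by
  have hsq : (R / 2) ^ 2 ≤ ‖a • u + b • v‖ ^ 2 := by
    rw [norm_add_sq_real, norm_smul, norm_smul, real_inner_smul_left, real_inner_smul_right, hu, hv,
      Real.norm_of_nonneg ha, Real.norm_of_nonneg hb]
    obtain rfl : b = 1 - a := by linarith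
    nlinarith [mul_nonneg ha (mul_nonneg hb huv), mul_nonneg (sq_nonneg (2 * a - 1)) (sq_nonneg R)]
  exact (le_abs_self _).trans (abs_le_of_sq_le_sq hsq (norm_nonneg _))

theorem exists_lipschitzWith_path_avoiding_ball [FiniteDimensional ℝ E] (hE : 2 ≤ finrank ℝ E)
    {o p q : E} {R : ℝ} (hp : dist p o = R) (hq : dist q o = R) :
    ∃ (γ : ℝ → E) (L : NNReal), (L : ℝ) ≤ 4 * R ∧ LipschitzWith L γ ∧ γ 0 = p ∧ γ 2 = q ∧
      ∀ t ∈ Icc (0 : ℝ) 2, R / 2 ≤ dist (γ t) o := by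
  have hR : 0 ≤ R := hp ▸ dist_nonneg
  rw [dist_eq_norm] at hp hq
  obtain ⟨w, hw, hpw, hqw⟩ := exists_norm_eq_one_inner_eq_zero_inner_nonneg hE (p - o) (q - o)
  set c := o + R • w
  have hc : ‖c - o‖ = R := by
    rw [add_sub_cancel_left, norm_smul, hw, mul_one, Real.norm_of_nonneg hR]
  have hmin : LipschitzWith 1 fun t : ℝ => min t 1 := LipschitzWith.id.min_const 1
  have hmax : LipschitzWith 1 fun t : ℝ => max (t - 1) 0 :=
    LipschitzWith.of_dist_le_mul fun s t => by
      simpa [Real.dist_eq] using abs_max_sub_max_le_abs (s - 1) (t - 1) 0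
  -- the polygon `p → c → q`; its two legs join vectors of norm `R` with nonnegative inner product
  refine ⟨fun t => p + (min t 1 • (c - p) + max (t - 1) 0 • (q - c)), ‖c - p‖₊ + ‖q - c‖₊,
    ?_, ?_, by simp, ?_, fun t ht => ?_⟩
  · push_cast
    linarith [norm_sub_le_norm_sub_add_norm_sub c o p, norm_sub_le_norm_sub_add_norm_sub q o c,
      norm_sub_rev o p, norm_sub_rev o c]
  · simpa using
      (LipschitzWith.const p).add ((hmin.smul_const (c - p)).add (hmax.smul_const (q - c)))
  · norm_num
  · rw [dist_eq_norm]
    rcases le_total t 1 with ht1 | ht1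
    · have hγ : p + (min t 1 • (c - p) + max (t - 1) 0 • (q - c)) - o =
          (1 - t) • (p - o) + t • (c - o) := by
        rw [min_eq_left ht1, max_eq_right (by linarith)]
        module
      rw [hγ]
      refine half_le_norm_smul_add_smul ?_ hp hc (by linarith) ht.1 (by ring)
      rw [add_sub_cancel_left, real_inner_smul_right, hpw, mul_zero]
    · have hγ : p + (min t 1 • (c - p) + max (t - 1) 0 • (q - c)) - o =
          (2 - t) • (c - o) + (t - 1) • (q - o) := by
        rw [min_eq_right ht1, max_eq_left (by linarith)]
        module
      rw [hγ]
      refine half_le_norm_smul_add_smul ?_ hc hq (by linarith [ht.2]) (by linarith) (by ring)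
      rw [add_sub_cancel_left, real_inner_smul_left, real_inner_comm]
      exact mul_nonneg hR hqw

namespace IsPhiChain

variable {Φ : ℝ → ℝ} {U : ℕ → Set E} {x : ℕ → E}

theorem sub_mul_le_of_detour [FiniteDimensional ℝ E] (h : IsPhiChain Φ U x)
    (hE : 2 ≤ finrank ℝ E) {o p q : E} {R r : ℝ} (hr : 0 ≤ r) {m₁ m₂ : ℕ} (hm : m₁ ≤ m₂)
    (hp : p ∉ U m₁) (hq : q ∈ U m₂) (hpo : dist p o = R) (hqo : dist q o = R)
    (hx : ∀ m ∈ Finset.Ico m₁ m₂, dist (x m) o + r ≤ R / 2) :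
    ((m₂ - m₁ : ℕ) : ℝ) * Φ r ≤ 8 * R := by
  obtain ⟨γ, L, hL, hγ, hγ0, hγ2, hfar⟩ := exists_lipschitzWith_path_avoiding_ball hE hpo hqo
  have := h.card_mul_le_of_lipschitzWith hγ zero_le_two hm (hγ0 ▸ hp) (hγ2 ▸ hq)
    fun m hm t ht _ => h.monotoneOn hr dist_nonneg
      (by linarith [hfar t ht, hx m hm, dist_triangle (γ t) (x m) o])
  linarith

end IsPhiChain

theorem not_isPhiChain [FiniteDimensional ℝ E] (hE : 2 ≤ finrank ℝ E) (Φ : ℝ → ℝ)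
    (U : ℕ → Set E) (x : ℕ → E) : ¬ IsPhiChain Φ U x := by
  intro h
  have hφ := h.pos
  obtain ⟨N, hN⟩ : ∃ N : ℕ, 400 * Φ 0 ≤ Φ (N * Φ 0) :=
    ((h.tendsto.comp (tendsto_natCast_atTop_atTop.atTop_mul_const hφ)).eventually_ge_atTop _).exists
  have hNφ : 0 ≤ N * Φ 0 := mul_nonneg N.cast_nonneg hφ.le
  set k := 2 * N + 2
  set l := 16 * k + 1
  set R := dist (x l) (x 0)
  have hRlow : ((16 * k : ℕ) : ℝ) * Φ 0 ≤ R :=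
    h.mul_le_dist_of_mem_frontier (h.notMem_of_le (Nat.zero_le 1)) (16 * k) (h.mem_frontier l)
  have hRup : R ≤ 3 * l * Φ 0 := h.dist_le_three_mul l
  have hxl : x l ∈ U (2 * k) :=
    h.antitone (by omega) (h.mem_of_mem_frontier_succ (h.mem_frontier l))
  by_cases hS : sphere (x 0) R ⊆ U k
  · have : Nontrivial E := Module.nontrivial_of_finrank_pos (R := ℝ) (by omega)
    obtain ⟨v, hv⟩ := exists_norm_eq E zero_le_one
    have hR : 0 ≤ R := dist_nonneg
    have hRv : ‖R • v‖ = R := by rw [norm_smul, hv, mul_one, Real.norm_of_nonneg hR]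
    have hrays := h.sub_mul_le_of_two_rays hv hR (N := N) (k := k) (by omega)
      (hS (by simp [hRv])) (hS (by simp [hRv]))
    rw [show k - (N + 1) = N + 1 by omega] at hrays
    push_cast [k, l] at hRlow hRup hrays
    nlinarith [mul_le_mul_of_nonneg_left hN (by positivity : (0 : ℝ) ≤ N + 1)]
  · obtain ⟨p, hpS, hpU⟩ := not_subset.mp hS
    have hdetour := h.sub_mul_le_of_detour hE hNφ (by omega : k ≤ 2 * k) hpU hxl
      (mem_sphere.1 hpS) rfl fun m hm => by
        have hm' : (m : ℝ) + 1 ≤ 2 * k := by exact_mod_cast (Finset.mem_Ico.1 hm).2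
        push_cast [k] at hRlow hm'
        nlinarith [h.dist_le_three_mul m]
    rw [show 2 * k - k = k by omega] at hdetour
    push_cast [k, l] at hRlow hRup hdetour
    nlinarith [mul_le_mul_of_nonneg_left hN (by positivity : (0 : ℝ) ≤ 2 * N + 2)]

end InnerProductSpace

/-- Euclidean space `ℝⁿ` (`n ≥ 2`) admits no infinite Φ-chain: there is no admissible
function `Φ` together with nested open sets `U 0 ⊇ U 1 ⊇ ⋯` and track points
`x 0, x 1, …` satisfying the Φ-chain conditions for all indices. -/
theorem no_infinite_phi_chain_in_euclidean
    (n : ℕ) (hn : 2 ≤ n) :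
    ¬ ∃ (Φ : ℝ → ℝ) (U : ℕ → Set (EuclideanSpace ℝ (Fin n)))
        (x : ℕ → EuclideanSpace ℝ (Fin n)),
      MonotoneOn Φ (Set.Ici 0) ∧ 0 < Φ 0 ∧ Tendsto Φ atTop atTop ∧
      (∀ i, IsOpen (U i)) ∧
      (∀ i, U (i + 1) ⊆ U i) ∧
      (∀ i, Φ 0 ≤ dist (x i) (x (i + 1)) ∧ dist (x i) (x (i + 1)) ≤ 3 * Φ 0) ∧
      (∀ i, x i ∈ frontier (U i)) ∧
      (∀ i, ∀ y ∈ frontier (U i),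
        Φ (dist y (x i)) ≤ infDist y (frontier (U (i + 1)))) ∧
      (∀ i, 0 < i → ∀ y ∈ frontier (U i),
        Φ (dist y (x i)) ≤ infDist y (frontier (U (i - 1)))) := by
  rintro ⟨Φ, U, x, hmono, hpos, htend, hopen, hsucc, hdist, hfr, hfwd, hbwd⟩
  exact not_isPhiChain (by rwa [finrank_euclideanSpace_fin]) Φ U x
    ⟨hmono, hpos, htend, hopen, hsucc, fun i => (hdist i).1, fun i => (hdist i).2, hfr, hfwd,
      fun i y hy => by simpa using hbwd (i + 1) i.succ_pos y hy⟩
end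

section
/- Let k ≥ 1, n ≥ 2. Consider the radial operator acting on f(r) by Lf = −α f''(r) + ((α − T)/r) f'(r) + b f(r) + c f(r), where α, T, b, c are functions of r with k⁻¹ ≤ α ≤ k, n k⁻¹ ≤ T ≤ n k, |b| ≤ k, |c| ≤ k. Then there exist r₀ > 0 and β > 0 depending only on k and n such that the function f(r) = sech(β r) satisfies Lf ≥ 0 for all 0 < r < r₀. -/
/-!
With `x = β r`, multiplying `L sech(β r)` by `cosh x` gives
`β² (α (1 - sinh² x) / cosh² x + (T - α) tanh x / x) + b + c`.
Since `1 / cosh x ≤ tanh x / x ≤ 1` and `(1 - sinh² x) / cosh² x ≥ 1 - 2 sinh² x`, the bracket is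
at least `T / cosh x - 2 α sinh² x`, hence at least `1 / (2k)` as soon as `sinh x ≤ 1 / (3k)`.
Taking `β = 2k` then makes `β² / (2k) = 2k` absorb `b + c ≥ -2k`, and
`r₀ = arsinh (1 / (3k)) / β` is where `sinh (β r)` reaches `1 / (3k)`.
-/

open Real

namespace Real

lemma sinh_le_mul_cosh {x : ℝ} (hx : 0 ≤ x) : sinh x ≤ x * cosh x := by
  have hderiv (y : ℝ) : HasDerivAt (fun t => t * cosh t - sinh t) (y * sinh y) y := by
    refine (((hasDerivAt_id' y).mul (hasDerivAt_cosh y)).sub (hasDerivAt_sinh y)).congr_deriv ?_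
    ring
  have hmono : MonotoneOn (fun t => t * cosh t - sinh t) (Set.Ici 0) := by
    refine monotoneOn_of_deriv_nonneg (convex_Ici 0) (by fun_prop)
      (fun y _ => (hderiv y).differentiableAt.differentiableWithinAt) fun y hy => ?_
    rw [interior_Ici] at hy
    rw [(hderiv y).deriv]
    exact mul_nonneg hy.le (sinh_nonneg_iff.mpr hy.le)
  simpa using hmono Set.self_mem_Ici hx hx

lemma tanh_div_self_le_one {x : ℝ} (hx : 0 < x) : tanh x / x ≤ 1 := by
  rw [div_le_one hx, tanh_eq_sinh_div_cosh, div_le_iff₀ (cosh_pos x)]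
  exact sinh_le_mul_cosh hx.le

lemma inv_cosh_le_tanh_div_self {x : ℝ} (hx : 0 < x) : (cosh x)⁻¹ ≤ tanh x / x := by
  rw [tanh_eq_sinh_div_cosh, div_div, inv_eq_one_div,
    div_le_div_iff₀ (cosh_pos x) (mul_pos (cosh_pos x) hx)]
  nlinarith [self_le_sinh_iff.mpr hx.le, cosh_pos x]

lemma one_sub_two_mul_sinh_sq_le (x : ℝ) :
    1 - 2 * sinh x ^ 2 ≤ (1 - sinh x ^ 2) / cosh x ^ 2 := by
  rw [le_div_iff₀ (by positivity), cosh_sq]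
  nlinarith [sq_nonneg (sinh x ^ 2)]

lemma hasDerivAt_inv_cosh_mul (β r : ℝ) :
    HasDerivAt (fun s => (cosh (β * s))⁻¹) (-β * sinh (β * r) / cosh (β * r) ^ 2) r := by
  have hmul : HasDerivAt (fun s => β * s) β r := by simpa using (hasDerivAt_id r).const_mul β
  refine (hmul.cosh.inv (cosh_pos (β * r)).ne').congr_deriv ?_
  ring

lemma deriv_inv_cosh_mul (β : ℝ) :
    deriv (fun s => (cosh (β * s))⁻¹) = fun r => -β * sinh (β * r) / cosh (β * r) ^ 2 :=
  funext fun r => (hasDerivAt_inv_cosh_mul β r).deriv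

lemma deriv_deriv_inv_cosh_mul (β r : ℝ) :
    deriv (deriv fun s => (cosh (β * s))⁻¹) r
      = β ^ 2 * (sinh (β * r) ^ 2 - 1) / cosh (β * r) ^ 3 := by
  have hmul : HasDerivAt (fun s => β * s) β r := by simpa using (hasDerivAt_id r).const_mul β
  have hnum := hmul.sinh.const_mul (-β)
  have hden := hmul.cosh.fun_pow 2
  have hch : cosh (β * r) ≠ 0 := (cosh_pos _).ne'
  rw [deriv_inv_cosh_mul]
  refine (hnum.div hden (pow_ne_zero 2 hch)).deriv.trans ?_
  simp only [Nat.cast_ofNat, Nat.add_one_sub_one, pow_one]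
  field_simp
  linear_combination (-β ^ 2) * cosh_sq (β * r)

end Real

lemma radial_operator_inv_cosh_mul (β r α T b c : ℝ) (hβ : β ≠ 0) (hr : r ≠ 0) :
    -α * deriv (deriv fun s => (cosh (β * s))⁻¹) r
        + ((α - T) / r) * deriv (fun s => (cosh (β * s))⁻¹) r
        + b * (cosh (β * r))⁻¹ + c * (cosh (β * r))⁻¹
      = (β ^ 2 * (α * ((1 - sinh (β * r) ^ 2) / cosh (β * r) ^ 2)
          + (T - α) * (tanh (β * r) / (β * r))) + (b + c)) * (cosh (β * r))⁻¹ := by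
  rw [deriv_deriv_inv_cosh_mul, deriv_inv_cosh_mul, tanh_eq_sinh_div_cosh]
  have hch : cosh (β * r) ≠ 0 := (cosh_pos _).ne'
  field_simp
  ring

lemma sub_le_radial_coefficient {x α T : ℝ} (hx : 0 < x) (hα : 0 ≤ α) (hT : 0 ≤ T) :
    T * (cosh x)⁻¹ - 2 * α * sinh x ^ 2
      ≤ α * ((1 - sinh x ^ 2) / cosh x ^ 2) + (T - α) * (tanh x / x) := by
  nlinarith [mul_le_mul_of_nonneg_left (one_sub_two_mul_sinh_sq_le x) hα,
    mul_le_mul_of_nonneg_left (tanh_div_self_le_one hx) hα,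
    mul_le_mul_of_nonneg_left (inv_cosh_le_tanh_div_self hx) hT]

lemma inv_two_mul_le_of_sinh_le {k x : ℝ} (hk : 1 ≤ k) (hx : 0 ≤ x) (hs : sinh x ≤ (3 * k)⁻¹) :
    (2 * k)⁻¹ ≤ k⁻¹ * (cosh x)⁻¹ - 2 * k * sinh x ^ 2 := by
  have hk0 : 0 < k := one_pos.trans_le hk
  have hs0 : 0 ≤ sinh x := sinh_nonneg_iff.mpr hx
  have hks : 3 * k * sinh x ≤ 1 :=
    calc 3 * k * sinh x ≤ 3 * k * (3 * k)⁻¹ := by gcongr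
      _ = 1 := mul_inv_cancel₀ (by positivity)
  have hcosh : cosh x ≤ 10 / 9 := by
    nlinarith [cosh_sq x, one_le_cosh x]
  have hinv : 9 / 10 ≤ (cosh x)⁻¹ := by
    rw [le_inv_comm₀ (by norm_num) (cosh_pos x)]; linarith
  have hsplit : k⁻¹ * (cosh x)⁻¹ - 2 * k * sinh x ^ 2 - (2 * k)⁻¹
      = k⁻¹ * ((cosh x)⁻¹ - 2 * (k * sinh x) ^ 2 - 1 / 2) := by
    field_simp
  rw [← sub_nonneg, hsplit]
  have hks2 : (k * sinh x) ^ 2 ≤ 1 / 9 := by nlinarith [mul_nonneg hk0.le hs0]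
  exact mul_nonneg (inv_nonneg.mpr hk0.le) (by linarith)

lemma inv_two_mul_le_radial_coefficient {k x α T : ℝ} (hk : 1 ≤ k) (hx : 0 < x)
    (hs : sinh x ≤ (3 * k)⁻¹) (hα₁ : k⁻¹ ≤ α) (hα₂ : α ≤ k) (hT : k⁻¹ ≤ T) :
    (2 * k)⁻¹ ≤ α * ((1 - sinh x ^ 2) / cosh x ^ 2) + (T - α) * (tanh x / x) := by
  have hk0 : 0 < k := one_pos.trans_le hk
  calc (2 * k)⁻¹ ≤ k⁻¹ * (cosh x)⁻¹ - 2 * k * sinh x ^ 2 := inv_two_mul_le_of_sinh_le hk hx.le hs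
    _ ≤ T * (cosh x)⁻¹ - 2 * α * sinh x ^ 2 := by gcongr
    _ ≤ _ := sub_le_radial_coefficient hx (hα₁.trans' (by positivity)) (hT.trans' (by positivity))

/-- There exist `r₀ > 0` and `β > 0`, depending only on `k` and `n`, such that
`f(r) = sech(β r)` satisfies `L f ≥ 0` for `0 < r < r₀`, where
`L f = -α f'' + ((α - T)/r) f' + b f + c f` with coefficients satisfying
`k⁻¹ ≤ α ≤ k`, `n k⁻¹ ≤ T ≤ n k`, `|b| ≤ k`, `|c| ≤ k`. -/
theorem sech_supersolution
    (k : ℝ) (n : ℕ) (hk : 1 ≤ k) (hn : 2 ≤ n) :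
    ∃ r₀ > (0:ℝ), ∃ β > (0:ℝ),
      ∀ r α T b c : ℝ, 0 < r → r < r₀ →
        k⁻¹ ≤ α → α ≤ k → (n : ℝ) * k⁻¹ ≤ T → T ≤ (n : ℝ) * k →
        |b| ≤ k → |c| ≤ k →
        0 ≤ -α * deriv (deriv fun s => (Real.cosh (β * s))⁻¹) r
            + ((α - T) / r) * deriv (fun s => (Real.cosh (β * s))⁻¹) r
            + b * (Real.cosh (β * r))⁻¹ + c * (Real.cosh (β * r))⁻¹ := by
  have hk0 : 0 < k := one_pos.trans_le hk
  refine ⟨arsinh (3 * k)⁻¹ / (2 * k), div_pos (arsinh_pos_iff.mpr (by positivity)) (by positivity),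
    2 * k, by positivity, fun r α T b c hr hr₀ hα₁ hα₂ hT₁ _ hb hc => ?_⟩
  have hx : 0 < 2 * k * r := by positivity
  have hsinh : sinh (2 * k * r) ≤ (3 * k)⁻¹ := by
    rw [lt_div_iff₀ (by positivity), mul_comm] at hr₀
    simpa using (sinh_lt_sinh.mpr hr₀).le
  have hT : k⁻¹ ≤ T := le_trans (le_mul_of_one_le_left (by positivity) (by norm_cast; omega)) hT₁
  have hcoef := inv_two_mul_le_radial_coefficient hk hx hsinh hα₁ hα₂ hT
  rw [radial_operator_inv_cosh_mul (2 * k) r α T b c (by positivity) hr.ne']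
  refine mul_nonneg ?_ (inv_nonneg.mpr (cosh_pos _).le)
  have hbc : -(2 * k) ≤ b + c := by linarith [neg_abs_le b, neg_abs_le c]
  have hscale : (2 * k) ^ 2 * (2 * k)⁻¹ = 2 * k := by field_simp
  linarith [mul_le_mul_of_nonneg_left hcoef (sq_nonneg (2 * k))]
end

section
/- Every bounded convex domain D ⊂ ℝⁿ is c-uniform for some c ≥ 1 depending on the ratio of its diameter to its inradius. -/
/-!
Let `B(x₀, r) ⊆ D`, `Δ = diam D` and `p ≠ q` in `D`. Join `p` to `q` by the chord `[p, q]`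
pulled towards `x₀` with weight `κ · min t (1 - t)` at time `t ∈ [0, 1]`, where
`κ = |p - q| / Δ`. By convexity the point at time `t` is the centre of a ball of radius
`κ · min t (1 - t) · r` inside `D`, which bounds its distance to `∂D` from below. Pulling costs
speed at most `κ Δ = |p - q|`, so the path is `2|p - q|`-Lipschitz, and the length of its shorter
half at time `t` is at most `2|p - q| · min t (1 - t) ≤ (2Δ / r) · dist(γ t, ∂D)`.
-/

open Metric

/-- `D` is a `c`-uniform domain: any two points of `D` are joined by a rectifiable
curve in `D` of length at most `c · d(p,q)` satisfying the twisted double cone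
condition with constant `c`. -/
def IsUniformDomain {n : ℕ} (c : ℝ) (D : Set (EuclideanSpace ℝ (Fin n))) : Prop :=
  ∀ p ∈ D, ∀ q ∈ D, ∃ (a b : ℝ) (γ : ℝ → EuclideanSpace ℝ (Fin n)),
    a < b ∧ γ a = p ∧ γ b = q ∧
    (∀ t ∈ Set.Icc a b, γ t ∈ D) ∧
    ContinuousOn γ (Set.Icc a b) ∧
    eVariationOn γ (Set.Icc a b) ≤ ENNReal.ofReal (c * dist p q) ∧
    ∀ t ∈ Set.Icc a b,
      min (eVariationOn γ (Set.Icc a t)) (eVariationOn γ (Set.Icc t b)) ≤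
        ENNReal.ofReal (c * infDist (γ t) (frontier D))

open Set AffineMap
open scoped NNReal ENNReal

theorem LipschitzOnWith.eVariationOn_Icc_le {E : Type*} [PseudoEMetricSpace E] {f : ℝ → E}
    {K : ℝ≥0} {a b : ℝ} (hf : LipschitzOnWith K f (Icc a b)) :
    eVariationOn f (Icc a b) ≤ K * ENNReal.ofReal (b - a) := by
  simpa using hf.comp_eVariationOn_le (g := id) (mapsTo_id _)

theorem le_infDist_frontier_of_ball_subset {E : Type*} [PseudoMetricSpace E] {D : Set E}
    (hD : IsOpen D) (hfr : (frontier D).Nonempty) {x : E} {ρ : ℝ} (h : ball x ρ ⊆ D) :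
    ρ ≤ infDist x (frontier D) :=
  (le_infDist hfr).2 fun _ hy => not_lt.1 fun hlt =>
    (disjoint_frontier_iff_isOpen.2 hD).notMem_of_mem_left hy (h (mem_ball'.2 hlt))

theorem Bornology.IsBounded.frontier_nonempty {E : Type*} [NormedAddCommGroup E]
    [NormedSpace ℝ E] [Nontrivial E] {D : Set E} (hD : Bornology.IsBounded D)
    (hne : D.Nonempty) : (frontier D).Nonempty :=
  nonempty_frontier_iff.2 ⟨hne, fun h => NormedSpace.unbounded_univ ℝ E (h ▸ hD)⟩

theorem Convex.ball_lineMap_subset {E : Type*} [NormedAddCommGroup E] [NormedSpace ℝ E]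
    {D : Set E} (hD : Convex ℝ D) {u x : E} (hu : u ∈ D) {r θ : ℝ}
    (hball : ball x r ⊆ D) (hθ : θ ∈ Icc (0 : ℝ) 1) :
    ball (lineMap u x θ) (θ * r) ⊆ D := by
  rcases hθ.1.eq_or_lt with rfl | hθ₀
  · simp
  intro y hy
  have hz : x + θ⁻¹ • (y - lineMap u x θ) ∈ ball x r := by
    rw [mem_ball, dist_eq_norm, add_sub_cancel_left, norm_smul, Real.norm_eq_abs,
      abs_inv, abs_of_pos hθ₀, inv_mul_lt_iff₀ hθ₀, ← dist_eq_norm]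
    exact hy
  convert hD.lineMap_mem hu (hball hz) hθ using 1
  rw [lineMap_apply_module, lineMap_apply_module, smul_add, smul_smul,
    mul_inv_cancel₀ hθ₀.ne', one_smul]
  abel

theorem LipschitzOnWith.lineMap_const_right {α E : Type*} [PseudoMetricSpace α]
    [NormedAddCommGroup E] [NormedSpace ℝ E] {σ : α → E} {θ : α → ℝ} {s : Set α} {x : E}
    {Kσ Kθ R : ℝ≥0} (hσ : LipschitzOnWith Kσ σ s) (hθ : LipschitzOnWith Kθ θ s)
    (hθ_mem : MapsTo θ s (Icc 0 1)) (hR : ∀ t ∈ s, dist (σ t) x ≤ R) :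
    LipschitzOnWith (Kσ + Kθ * R) (fun t => lineMap (σ t) x (θ t)) s := by
  rw [lipschitzOnWith_iff_dist_le_mul] at hσ hθ ⊢
  intro t ht t' ht'
  have hdiff : lineMap (σ t) x (θ t) - lineMap (σ t') x (θ t') =
      (1 - θ t) • (σ t - σ t') + (θ t - θ t') • (x - σ t') := by
    simp only [lineMap_apply_module]
    module
  have hθt : |1 - θ t| ≤ 1 :=
    abs_le.2 ⟨by linarith [(hθ_mem ht).2], by linarith [(hθ_mem ht).1]⟩
  calc dist (lineMap (σ t) x (θ t)) (lineMap (σ t') x (θ t'))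
      ≤ |1 - θ t| * ‖σ t - σ t'‖ + |θ t - θ t'| * ‖x - σ t'‖ := by
        rw [dist_eq_norm, hdiff]
        refine (norm_add_le _ _).trans_eq ?_
        rw [norm_smul, norm_smul, Real.norm_eq_abs, Real.norm_eq_abs]
    _ ≤ 1 * (Kσ * dist t t') + Kθ * dist t t' * R := by
        rw [← dist_eq_norm, ← dist_eq_norm, dist_comm x, ← Real.dist_eq (θ t)]
        gcongr
        exacts [hσ t ht t' ht', hθ t ht t' ht', hR t' ht']
    _ = ↑(Kσ + Kθ * R) * dist t t' := by push_cast; ring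

theorem nndist_div_diam_le_one {E : Type*} [PseudoMetricSpace E] {D : Set E} {p q : E}
    (hbd : Bornology.IsBounded D) (hp : p ∈ D) (hq : q ∈ D) :
    nndist p q / (diam D).toNNReal ≤ 1 :=
  div_le_one_of_le₀
    ((Real.le_toNNReal_iff_coe_le diam_nonneg).2 (dist_le_diam_of_mem hbd hp hq)) zero_le

section BentSegment

variable {E : Type*} [NormedAddCommGroup E] [NormedSpace ℝ E]

def bentSegment (p q x : E) (κ : ℝ≥0) (t : ℝ) : E :=
  lineMap (lineMap p q t) x (κ * min t (1 - t))

variable {p q x : E} {κ : ℝ≥0}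

@[simp]
theorem bentSegment_zero : bentSegment p q x κ 0 = p := by simp [bentSegment]

@[simp]
theorem bentSegment_one : bentSegment p q x κ 1 = q := by simp [bentSegment]

theorem lipschitzWith_mul_min_one_sub (κ : ℝ≥0) :
    LipschitzWith κ fun t : ℝ => κ * min t (1 - t) :=
  LipschitzWith.of_dist_le_mul fun s t => by
    rw [Real.dist_eq, Real.dist_eq, ← mul_sub, abs_mul, NNReal.abs_eq]
    refine mul_le_mul_of_nonneg_left ?_ κ.coe_nonneg
    refine (abs_min_sub_min_le_max s (1 - s) t (1 - t)).trans_eq ?_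
    rw [sub_sub_sub_cancel_left, abs_sub_comm, max_self]

theorem mul_min_one_sub_mem_Icc (hκ : κ ≤ 2) {t : ℝ} (ht : t ∈ Icc (0 : ℝ) 1) :
    (κ : ℝ) * min t (1 - t) ∈ Icc (0 : ℝ) 1 := by
  have hκ' : (κ : ℝ) ≤ 2 := by exact_mod_cast hκ
  have : min t (1 - t) ≤ 1 / 2 := by grind
  constructor
  · exact mul_nonneg κ.coe_nonneg (le_min ht.1 (by linarith [ht.2]))
  · nlinarith [κ.coe_nonneg]

theorem lipschitzOnWith_bentSegment (hκ : κ ≤ 2) {R : ℝ≥0}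
    (hR : ∀ t ∈ Icc (0 : ℝ) 1, dist (lineMap p q t) x ≤ R) :
    LipschitzOnWith (nndist p q + κ * R) (bentSegment p q x κ) (Icc 0 1) :=
  (lipschitzWith_lineMap p q).lipschitzOnWith.lineMap_const_right
    (lipschitzWith_mul_min_one_sub κ).lipschitzOnWith
    (fun _ ht => mul_min_one_sub_mem_Icc hκ ht) hR

variable {D : Set E}

theorem Convex.bentSegment_mem (hD : Convex ℝ D) (hp : p ∈ D) (hq : q ∈ D) (hx : x ∈ D)
    (hκ : κ ≤ 2) {t : ℝ} (ht : t ∈ Icc (0 : ℝ) 1) : bentSegment p q x κ t ∈ D :=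
  hD.lineMap_mem (hD.lineMap_mem hp hq ht) hx (mul_min_one_sub_mem_Icc hκ ht)

theorem Convex.ball_bentSegment_subset (hD : Convex ℝ D) (hp : p ∈ D) (hq : q ∈ D) {r : ℝ}
    (hball : ball x r ⊆ D) (hκ : κ ≤ 2) {t : ℝ} (ht : t ∈ Icc (0 : ℝ) 1) :
    ball (bentSegment p q x κ t) (κ * min t (1 - t) * r) ⊆ D :=
  hD.ball_lineMap_subset (hD.lineMap_mem hp hq ht) hball (mul_min_one_sub_mem_Icc hκ ht)

theorem Convex.lipschitzOnWith_bentSegment_nndist_div_diam (hD : Convex ℝ D)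
    (hbd : Bornology.IsBounded D) (hp : p ∈ D) (hq : q ∈ D) (hx : x ∈ D) (hpq : p ≠ q) :
    LipschitzOnWith (2 * nndist p q)
      (bentSegment p q x (nndist p q / (diam D).toNNReal)) (Icc 0 1) := by
  have hΔ : (diam D).toNNReal ≠ 0 := (Real.toNNReal_pos.2 <|
    (dist_pos.2 hpq).trans_le (dist_le_diam_of_mem hbd hp hq)).ne'
  refine (lipschitzOnWith_bentSegment (R := (diam D).toNNReal)
    ((nndist_div_diam_le_one hbd hp hq).trans one_le_two) fun t ht => ?_).weaken ?_
  · rw [Real.coe_toNNReal _ diam_nonneg]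
    exact dist_le_diam_of_mem hbd (hD.lineMap_mem hp hq ht) hx
  · rw [div_mul_cancel₀ _ hΔ, two_mul]

end BentSegment

theorem IsUniformDomain.of_lipschitz_paths {n : ℕ} {c : ℝ} {D : Set (EuclideanSpace ℝ (Fin n))}
    (h : ∀ p ∈ D, ∀ q ∈ D, p ≠ q → ∃ (γ : ℝ → EuclideanSpace ℝ (Fin n)) (L : ℝ≥0),
      γ 0 = p ∧ γ 1 = q ∧ MapsTo γ (Icc 0 1) D ∧ LipschitzOnWith L γ (Icc 0 1) ∧
      L ≤ c * dist p q ∧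
      ∀ t ∈ Icc (0 : ℝ) 1, L * min t (1 - t) ≤ c * infDist (γ t) (frontier D)) :
    IsUniformDomain c D := by
  intro p hp q hq
  rcases eq_or_ne p q with rfl | hpq
  · have hconst (s : Set ℝ) : eVariationOn (fun _ : ℝ => p) s = 0 :=
      eVariationOn.constant_on (by rintro _ ⟨_, -, rfl⟩ _ ⟨_, -, rfl⟩; rfl)
    exact ⟨0, 1, fun _ => p, one_pos, rfl, rfl, fun _ _ => hp, continuousOn_const,
      by simp [hconst], fun _ _ => by simp [hconst]⟩
  obtain ⟨γ, L, hγ0, hγ1, hγD, hγL, hL, hcone⟩ := h p hp q hq hpq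
  have hvar {a b : ℝ} (hab : Icc a b ⊆ Icc 0 1) :
      eVariationOn γ (Icc a b) ≤ ENNReal.ofReal (L * (b - a)) := by
    rw [ENNReal.ofReal_mul L.coe_nonneg, ENNReal.ofReal_coe_nnreal]
    exact (hγL.mono hab).eVariationOn_Icc_le
  refine ⟨0, 1, γ, one_pos, hγ0, hγ1, hγD, hγL.continuousOn,
    (hvar le_rfl).trans (ENNReal.ofReal_le_ofReal (by simpa using hL)), fun t ht => ?_⟩
  rcases le_total t (1 - t) with hle | hle
  · refine (min_le_left _ _).trans ((hvar (Icc_subset_Icc le_rfl ht.2)).trans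
      (ENNReal.ofReal_le_ofReal ?_))
    simpa [min_eq_left hle] using hcone t ht
  · refine (min_le_right _ _).trans ((hvar (Icc_subset_Icc ht.1 le_rfl)).trans
      (ENNReal.ofReal_le_ofReal ?_))
    simpa [min_eq_right hle] using hcone t ht

/-- Every bounded convex domain is `c`-uniform for some `c ≥ 1` depending only on the
ratio of its diameter to its inradius. -/
theorem boundedConvex_isUniformDomain :
    ∃ C : ℝ → ℝ, ∀ (n : ℕ) (D : Set (EuclideanSpace ℝ (Fin n))),
      IsOpen D → Convex ℝ D → Bornology.IsBounded D → D.Nonempty →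
      ∀ (x₀ : EuclideanSpace ℝ (Fin n)) (r : ℝ), 0 < r → ball x₀ r ⊆ D →
        ∃ c : ℝ, 1 ≤ c ∧ c ≤ C (diam D / r) ∧ IsUniformDomain c D := by
  refine ⟨fun x => 2 * x + 2, fun n D hopen hconv hbd hne x₀ r hr hball => ?_⟩
  have hratio : 0 ≤ diam D / r := div_nonneg diam_nonneg hr.le
  refine ⟨2 * (diam D / r) + 2, by linarith, le_rfl,
    IsUniformDomain.of_lipschitz_paths fun p hp q hq hpq => ?_⟩
  have : Nontrivial (EuclideanSpace ℝ (Fin n)) := nontrivial_of_ne p q hpq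
  have hx₀ : x₀ ∈ D := hball (mem_ball_self hr)
  have hΔ : 0 < diam D := (dist_pos.2 hpq).trans_le (dist_le_diam_of_mem hbd hp hq)
  set κ : ℝ≥0 := nndist p q / (diam D).toNNReal
  have hκ : (κ : ℝ) = dist p q / diam D := by simp [κ, Real.coe_toNNReal _ diam_nonneg]
  have hκ₂ : κ ≤ 2 := (nndist_div_diam_le_one hbd hp hq).trans one_le_two
  refine ⟨bentSegment p q x₀ κ, 2 * nndist p q, bentSegment_zero, bentSegment_one,
    fun t ht => hconv.bentSegment_mem hp hq hx₀ hκ₂ ht,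
    hconv.lipschitzOnWith_bentSegment_nndist_div_diam hbd hp hq hx₀ hpq, ?_, fun t ht => ?_⟩
  · push_cast
    nlinarith [dist_nonneg (x := p) (y := q)]
  have hdist := le_infDist_frontier_of_ball_subset hopen (hbd.frontier_nonempty hne)
    (hconv.ball_bentSegment_subset hp hq hball hκ₂ ht)
  calc ((2 * nndist p q : ℝ≥0) : ℝ) * min t (1 - t)
      = 2 * (diam D / r) * (κ * min t (1 - t) * r) := by
        rw [hκ]
        push_cast
        field_simp
    _ ≤ 2 * (diam D / r) * infDist (bentSegment p q x₀ κ t) (frontier D) := by gcongr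
    _ ≤ (2 * (diam D / r) + 2) * infDist (bentSegment p q x₀ κ t) (frontier D) :=
        mul_le_mul_of_nonneg_right (by linarith) infDist_nonneg
end
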